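/- Let S = (S_t)_{t∈ℝ} be a random element of C(ℝ,ℝ) that is almost surely asymptotically linear with strictly positive drift (S_t/t → c > 0 as |t| → ∞ for some random c > 0) and satisfies TS =_d S, where T is Pitman's transformation. Then the law of (S_t)_{t≥0} conditioned on inf_{t≥0} S_t = 0 equals the law of (2M̄_t − S_t)_{t≥0} conditioned on M_0 = 0, where M̄_t := sup_{0≤s≤t} S_s and M_0 := sup_{s≤0} S_s. -/

import Mathlib

open Set MeasureTheory ProbabilityTheory Filter

private lemma sSup_congr_of_closure {s t : Set ℝ} (hst : s ⊆ t) (hts : t ⊆ closure s) :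
    sSup s = sSup t := by
  have hub : upperBounds s = upperBounds t := by
    apply subset_antisymm
    · intro x hx
      exact upperBounds_mono_set hts (by rwa [upperBounds_closure])
    · exact upperBounds_mono_set hst
  rcases s.eq_empty_or_nonempty with rfl | hs
  · have ht : t = ∅ := subset_empty_iff.1 (by simpa [closure_empty] using hts)
    rw [ht]
  · have ht : t.Nonempty := hs.mono hst
    by_cases hb : BddAbove s
    · have hbt : BddAbove t := by rwa [BddAbove, ← hub]
      have h1 : IsLUB s (sSup s) := isLUB_csSup hs hb
      have h2 : IsLUB t (sSup s) := ⟨by rw [← hub]; exact h1.1, by rw [← hub]; exact h1.2⟩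
      exact (h2.csSup_eq ht).symm
    · have hbt : ¬ BddAbove t := by rwa [BddAbove, ← hub]
      rw [Real.sSup_of_not_bddAbove hb, Real.sSup_of_not_bddAbove hbt]

private lemma sInf_congr_of_closure {s t : Set ℝ} (hst : s ⊆ t) (hts : t ⊆ closure s) :
    sInf s = sInf t := by
  have hlb : lowerBounds s = lowerBounds t := by
    apply subset_antisymm
    · intro x hx
      exact lowerBounds_mono_set hts (by rwa [lowerBounds_closure])
    · exact lowerBounds_mono_set hst
  rcases s.eq_empty_or_nonempty with rfl | hs
  · have ht : t = ∅ := subset_empty_iff.1 (by simpa [closure_empty] using hts)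
    rw [ht]
  · have ht : t.Nonempty := hs.mono hst
    by_cases hb : BddBelow s
    · have hbt : BddBelow t := by rwa [BddBelow, ← hlb]
      have h1 : IsGLB s (sInf s) := isGLB_csInf hs hb
      have h2 : IsGLB t (sInf s) := ⟨by rw [← hlb]; exact h1.1, by rw [← hlb]; exact h1.2⟩
      exact (h2.csInf_eq ht).symm
    · have hbt : ¬ BddBelow t := by rwa [BddBelow, ← hlb]
      rw [Real.sInf_of_not_bddBelow hb, Real.sInf_of_not_bddBelow hbt]

private lemma real_sSup_range_rat (g : ℚ → ℝ) :
    sSup (range g) = (⨆ q : ℚ, ((g q : ℝ) : EReal)).toReal := by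
  by_cases hb : BddAbove (range g)
  · have h : (((⨆ q : ℚ, g q : ℝ)) : EReal) = ⨆ q : ℚ, ((g q : ℝ) : EReal) :=
      Monotone.map_ciSup_of_continuousAt (continuous_coe_real_ereal.continuousAt)
        (fun a b hab => EReal.coe_le_coe_iff.2 hab) hb
    rw [← h, EReal.toReal_coe]
    rfl
  · have hbot : (⨆ q : ℚ, ((g q : ℝ) : EReal)) ≠ ⊥ := by
      intro hb'
      have h1 : ((g 0 : ℝ) : EReal) ≤ ⨆ q : ℚ, ((g q : ℝ) : EReal) := by
        simpa using le_iSup (fun q : ℚ => ((g q : ℝ) : EReal)) 0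
      rw [hb'] at h1
      exact (EReal.coe_ne_bot _) (le_bot_iff.1 h1)
    have htop : (⨆ q : ℚ, ((g q : ℝ) : EReal)) = ⊤ := by
      by_contra h
      apply hb
      refine ⟨(⨆ q : ℚ, ((g q : ℝ) : EReal)).toReal, ?_⟩
      rintro x ⟨q, rfl⟩
      have h1 : ((g q : ℝ) : EReal) ≤ ⨆ q : ℚ, ((g q : ℝ) : EReal) := by
        simpa using le_iSup (fun q : ℚ => ((g q : ℝ) : EReal)) q
      rw [← EReal.coe_toReal h hbot] at h1
      exact_mod_cast h1
    rw [htop, Real.sSup_of_not_bddAbove hb]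
    simp

private lemma coe_sInf_range_rat (g : ℚ → ℝ) (hb : BddBelow (range g)) :
    ((sInf (range g) : ℝ) : EReal) = ⨅ q : ℚ, ((g q : ℝ) : EReal) := by
  have h : (((⨅ q : ℚ, g q : ℝ)) : EReal) = ⨅ q : ℚ, ((g q : ℝ) : EReal) :=
    Monotone.map_ciInf_of_continuousAt (continuous_coe_real_ereal.continuousAt)
      (fun a b hab => EReal.coe_le_coe_iff.2 hab) hb
  rw [← h]
  rfl

private lemma sSup_image_Iic_eq (f : ℝ → ℝ) (hf : Continuous f) (t : ℝ) :
    sSup (f '' Iic t) = sSup (range fun q : ℚ => f (min (q : ℝ) t)) := by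
  refine (sSup_congr_of_closure ?_ ?_).symm
  · rintro x ⟨q, rfl⟩
    exact ⟨min (q : ℝ) t, mem_Iic.2 (min_le_right _ _), rfl⟩
  · rintro y ⟨x, hx, rfl⟩
    have hxt : f x = (fun z : ℝ => f (min z t)) x := by
      simp only [min_eq_left (mem_Iic.1 hx)]
    rw [hxt]
    have hcl : x ∈ closure (range ((↑) : ℚ → ℝ)) := by
      rw [Rat.denseRange_cast.closure_eq]; trivial
    have hc2 : (fun z : ℝ => f (min z t)) '' closure (range ((↑) : ℚ → ℝ)) ⊆
        closure ((fun z : ℝ => f (min z t)) '' range ((↑) : ℚ → ℝ)) :=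
      image_closure_subset_closure_image (hf.comp (continuous_id.min continuous_const))
    have hmem : (fun z : ℝ => f (min z t)) x ∈
        closure ((fun z : ℝ => f (min z t)) '' range ((↑) : ℚ → ℝ)) :=
      hc2 ⟨x, hcl, rfl⟩
    have him : (fun z : ℝ => f (min z t)) '' range ((↑) : ℚ → ℝ) =
        range fun q : ℚ => f (min (q : ℝ) t) := by
      rw [← range_comp]; rfl
    rwa [him] at hmem

private lemma sInf_image_Ici_eq (f : ℝ → ℝ) (hf : Continuous f) :
    sInf (f '' Ici 0) = sInf (range fun q : ℚ => f (max (q : ℝ) 0)) := by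
  refine (sInf_congr_of_closure ?_ ?_).symm
  · rintro x ⟨q, rfl⟩
    exact ⟨max (q : ℝ) 0, mem_Ici.2 (le_max_right _ _), rfl⟩
  · rintro y ⟨x, hx, rfl⟩
    have hxt : f x = (fun z : ℝ => f (max z 0)) x := by
      simp only [max_eq_left (mem_Ici.1 hx)]
    rw [hxt]
    have hcl : x ∈ closure (range ((↑) : ℚ → ℝ)) := by
      rw [Rat.denseRange_cast.closure_eq]; trivial
    have hc2 : (fun z : ℝ => f (max z 0)) '' closure (range ((↑) : ℚ → ℝ)) ⊆
        closure ((fun z : ℝ => f (max z 0)) '' range ((↑) : ℚ → ℝ)) :=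
      image_closure_subset_closure_image (hf.comp (continuous_id.max continuous_const))
    have hmem : (fun z : ℝ => f (max z 0)) x ∈
        closure ((fun z : ℝ => f (max z 0)) '' range ((↑) : ℚ → ℝ)) :=
      hc2 ⟨x, hcl, rfl⟩
    have him : (fun z : ℝ => f (max z 0)) '' range ((↑) : ℚ → ℝ) =
        range fun q : ℚ => f (max (q : ℝ) 0) := by
      rw [← range_comp]; rfl
    rwa [him] at hmem

private lemma bddAbove_image_Iic_of_tendsto {f : ℝ → ℝ} (hf : Continuous f)
    (h : Tendsto f atBot atBot) (t : ℝ) : BddAbove (f '' Iic t) := by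
  obtain ⟨T, hT⟩ := eventually_atBot.1 (h.eventually_le_atBot (0 : ℝ))
  have h1 : Iic t ⊆ Iic (min T t) ∪ Icc (min T t) t := by
    intro x hx
    rcases le_or_gt x (min T t) with h | h
    · exact Or.inl h
    · exact Or.inr ⟨h.le, hx⟩
  have h2 : BddAbove (f '' (Iic (min T t) ∪ Icc (min T t) t)) := by
    rw [image_union]
    refine BddAbove.union ⟨0, ?_⟩ (isCompact_Icc.image hf).bddAbove
    rintro y ⟨x, hx, rfl⟩
    exact hT x (le_trans hx (min_le_left T t))
  exact h2.mono (image_mono (f := f) h1)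

private lemma bddBelow_image_Ici_of_tendsto {f : ℝ → ℝ} (hf : Continuous f)
    (h : Tendsto f atTop atTop) : BddBelow (f '' Ici 0) := by
  obtain ⟨T, hT⟩ := eventually_atTop.1 (h.eventually_ge_atTop (0 : ℝ))
  have h1 : Ici (0 : ℝ) ⊆ Icc 0 (max T 0) ∪ Ici (max T 0) := by
    intro x hx
    rcases le_or_gt x (max T 0) with h | h
    · exact Or.inl ⟨hx, h⟩
    · exact Or.inr h.le
  have h2 : BddBelow (f '' (Icc 0 (max T 0) ∪ Ici (max T 0))) := by
    rw [image_union]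
    refine BddBelow.union (isCompact_Icc.image hf).bddBelow ⟨0, ?_⟩
    rintro y ⟨x, hx, rfl⟩
    exact hT x (le_trans (le_max_left T 0) hx)
  exact h2.mono (image_mono (f := f) h1)

/-- For a random continuous path `S` that is a.s. asymptotically linear with strictly
positive drift and invariant in law under Pitman's transformation, the law of
`(S_t)_{t≥0}` conditioned on `inf_{t≥0} S_t = 0` equals the law of
`(2M̄_t - S_t)_{t≥0}` conditioned on `M_0 = 0`, where `M̄_t = sup_{0≤s≤t} S_s` and
`M_0 = sup_{s≤0} S_s`. -/
theorem stmt_18 {Ω : Type*} [MeasurableSpace Ω] (P : Measure Ω) [IsProbabilityMeasure P]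
    (S : ℝ → Ω → ℝ) (hcont : ∀ ω, Continuous fun t => S t ω) (h0 : ∀ ω, S 0 ω = 0)
    (hmeas : ∀ t, Measurable (S t))
    -- almost sure asymptotic linearity with strictly positive drift
    (hlin : ∀ᵐ ω ∂P, ∃ c : ℝ, 0 < c ∧
      Tendsto (fun t => S t ω / t) atTop (nhds c) ∧
      Tendsto (fun t => S t ω / t) atBot (nhds c))
    (M : ℝ → Ω → ℝ) (hM : ∀ (t : ℝ) ω, M t ω = sSup ((fun s => S s ω) '' Iic t))
    (TS : ℝ → Ω → ℝ) (hTS : ∀ (t : ℝ) ω, TS t ω = 2 * M t ω - S t ω - 2 * M 0 ω)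
    -- invariance in distribution under Pitman's transformation
    (hinv : Measure.map (fun ω => fun t : ℝ => TS t ω) P =
      Measure.map (fun ω => fun t : ℝ => S t ω) P)
    -- the two conditioning events, assumed of positive probability
    (A B : Set Ω)
    (hA : A = {ω | sInf ((fun t => S t ω) '' Ici 0) = 0})
    (hB : B = {ω | M 0 ω = 0})
    (hApos : P A ≠ 0) (hBpos : P B ≠ 0) :
    Measure.map (fun ω => fun t : {t : ℝ // 0 ≤ t} => S t ω)
        (ProbabilityTheory.cond P A) =
      Measure.map
        (fun ω => fun t : {t : ℝ // 0 ≤ t} =>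
          2 * sSup ((fun s => S s ω) '' Icc 0 (t : ℝ)) - S t ω)
        (ProbabilityTheory.cond P B) := by
  classical
  -- the "good" set of ω where asymptotic linearity holds
  set L : Set Ω := {ω | ∃ c : ℝ, 0 < c ∧
      Tendsto (fun t => S t ω / t) atTop (nhds c) ∧
      Tendsto (fun t => S t ω / t) atBot (nhds c)} with hLdef
  have hlinL : ∀ᵐ ω ∂P, ω ∈ L := hlin
  -- divergence of good paths
  have htop : ∀ ω ∈ L, Tendsto (fun t => S t ω) atTop atTop := by
    intro ω hω
    obtain ⟨c, hc, h1, -⟩ := hω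
    have hev : ∀ᶠ t in atTop, c / 2 * t ≤ S t ω := by
      have h2 : ∀ᶠ t in atTop, c / 2 < S t ω / t :=
        h1.eventually (eventually_gt_nhds (by linarith))
      filter_upwards [h2, eventually_gt_atTop (0 : ℝ)] with t ht ht0
      exact ((lt_div_iff₀ ht0).1 ht).le
    exact tendsto_atTop_mono' _ hev (Tendsto.const_mul_atTop (by linarith) tendsto_id)
  have hbot : ∀ ω ∈ L, Tendsto (fun t => S t ω) atBot atBot := by
    intro ω hω
    obtain ⟨c, hc, -, h1⟩ := hω
    have hev : ∀ᶠ t in atBot, S t ω ≤ c / 2 * t := by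
      have h2 : ∀ᶠ t in atBot, c / 2 < S t ω / t :=
        h1.eventually (eventually_gt_nhds (by linarith))
      filter_upwards [h2, eventually_lt_atBot (0 : ℝ)] with t ht ht0
      exact ((lt_div_iff_of_neg ht0).1 ht).le
    exact tendsto_atBot_mono' _ hev (Tendsto.const_mul_atBot (by linarith) tendsto_id)
  -- boundedness facts
  have hbddA : ∀ ω ∈ L, ∀ t : ℝ, BddAbove ((fun s => S s ω) '' Iic t) :=
    fun ω hω t => bddAbove_image_Iic_of_tendsto (hcont ω) (hbot ω hω) t
  -- decomposition of the running supremum, valid whenever the past is bounded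
  have hMsplit : ∀ ω, ∀ t : ℝ, 0 ≤ t → BddAbove ((fun s => S s ω) '' Iic 0) →
      M t ω = max (M 0 ω) (sSup ((fun s => S s ω) '' Icc 0 t)) := by
    intro ω t ht hbdd
    rw [hM, hM, ← Iic_union_Icc_eq_Iic ht, image_union,
      csSup_union hbdd ⟨S 0 ω, 0, mem_Iic.2 le_rfl, rfl⟩
        ((isCompact_Icc.image (hcont ω)).bddAbove) ⟨S 0 ω, 0, ⟨le_rfl, ht⟩, rfl⟩]
  -- M 0 is nonnegative when the past is bounded
  have hM0nonneg : ∀ ω, BddAbove ((fun s => S s ω) '' Iic 0) → 0 ≤ M 0 ω := by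
    intro ω hbdd
    have h1 : S 0 ω ≤ M 0 ω := by
      rw [hM]; exact le_csSup hbdd ⟨0, mem_Iic.2 le_rfl, rfl⟩
    rw [h0 ω] at h1; exact h1
  -- lower bound for TS on the nonnegative half-line
  have hTSlb : ∀ ω ∈ L, ∀ t : ℝ, 0 ≤ t → -(M 0 ω) ≤ TS t ω := by
    intro ω hω t ht
    have hb := hbddA ω hω t
    have h1 : S t ω ≤ M t ω := by
      rw [hM]; exact le_csSup hb ⟨t, mem_Iic.2 le_rfl, rfl⟩
    have h2 : M 0 ω ≤ M t ω := by
      rw [hM, hM]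
      exact csSup_le_csSup hb ⟨S 0 ω, 0, mem_Iic.2 le_rfl, rfl⟩
        (image_mono (Iic_subset_Iic.2 ht))
    rw [hTS]; linarith
  -- rational approximation of the infimum value -M 0 of TS on [0, ∞)
  have happrox : ∀ ω ∈ L, ∀ ε : ℝ, 0 < ε →
      ∃ q : ℚ, 0 ≤ (q : ℝ) ∧ TS (q : ℝ) ω ≤ -(M 0 ω) + ε := by
    intro ω hω ε hε
    have hb0 : BddAbove ((fun s => S s ω) '' Iic 0) := hbddA ω hω 0
    have hm0 : 0 ≤ M 0 ω := hM0nonneg ω hb0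
    -- the hitting set of level M 0 ω
    set H : Set ℝ := {u : ℝ | 0 ≤ u ∧ M 0 ω ≤ S u ω} with hHdef
    have hne : H.Nonempty := by
      obtain ⟨T, hT⟩ := eventually_atTop.1 ((htop ω hω).eventually_ge_atTop (M 0 ω))
      exact ⟨max T 0, le_max_right _ _, hT _ (le_max_left _ _)⟩
    have hcl : IsClosed H := by
      have : H = Ici 0 ∩ {u : ℝ | M 0 ω ≤ S u ω} := by
        ext u; simp [hHdef, mem_Ici, mem_setOf_eq]
      rw [this]
      exact isClosed_Ici.inter (isClosed_le continuous_const (hcont ω))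
    have hbbH : BddBelow H := ⟨0, fun u hu => hu.1⟩
    set u0 := sInf H with hu0def
    have hu0mem : u0 ∈ H := hcl.csInf_mem hne hbbH
    have hu0nonneg : 0 ≤ u0 := hu0mem.1
    have hbelow : ∀ s : ℝ, 0 ≤ s → s < u0 → S s ω < M 0 ω := by
      intro s hs hsu
      by_contra h
      push_neg at h
      exact absurd (csInf_le hbbH ⟨hs, h⟩) (not_le.2 hsu)
    have hSu0 : S u0 ω = M 0 ω := by
      refine le_antisymm ?_ hu0mem.2
      rcases eq_or_lt_of_le hu0nonneg with h0' | h0'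
      · rw [← h0', h0 ω]; exact hm0
      · by_contra hgt
        push_neg at hgt
        have hopen : IsOpen {u : ℝ | M 0 ω < S u ω} :=
          isOpen_lt continuous_const (hcont ω)
        obtain ⟨δ, hδ, hball⟩ := Metric.isOpen_iff.1 hopen u0 hgt
        set s' := max (u0 - δ / 2) (u0 / 2) with hs'def
        have hs'lt : s' < u0 := max_lt (by linarith) (by linarith)
        have hs'0 : 0 ≤ s' := le_trans (by linarith) (le_max_right _ _)
        have hs'ball : s' ∈ Metric.ball u0 δ := by
          rw [Metric.mem_ball, Real.dist_eq, abs_lt]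
          have h1 := le_max_left (u0 - δ / 2) (u0 / 2)
          constructor <;> linarith
        exact absurd (hball hs'ball) (not_lt.2 (hbelow s' hs'0 hs'lt).le)
    have hIccle : ∀ s ∈ Icc (0 : ℝ) u0, S s ω ≤ M 0 ω := by
      rintro s ⟨hs0, hsu⟩
      rcases lt_or_eq_of_le hsu with h | h
      · exact (hbelow s hs0 h).le
      · rw [h, hSu0]
    -- choose a rational approximation of u0 from the left
    have hopen2 : IsOpen {u : ℝ | M 0 ω - ε < S u ω} :=
      isOpen_lt continuous_const (hcont ω)
    have hmem2 : u0 ∈ {u : ℝ | M 0 ω - ε < S u ω} := by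
      simp only [mem_setOf_eq, hSu0]; linarith
    obtain ⟨δ, hδ, hball⟩ := Metric.isOpen_iff.1 hopen2 u0 hmem2
    obtain ⟨q, hq0, hqle, hqδ⟩ : ∃ q : ℚ, 0 ≤ (q : ℝ) ∧ (q : ℝ) ≤ u0 ∧ u0 - (q : ℝ) < δ := by
      rcases eq_or_lt_of_le hu0nonneg with h0' | h0'
      · exact ⟨0, by norm_num, by rw [← h0']; norm_num, by rw [← h0']; simpa using hδ⟩
      · obtain ⟨q, hq1, hq2⟩ :=
          exists_rat_btwn (show max (u0 - δ) 0 < u0 from max_lt (by linarith) h0')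
        have h1 := le_max_left (u0 - δ) 0
        have h2 := le_max_right (u0 - δ) 0
        exact ⟨q, le_trans h2 hq1.le, hq2.le, by linarith⟩
    refine ⟨q, hq0, ?_⟩
    have hsupq : sSup ((fun s => S s ω) '' Icc 0 (q : ℝ)) ≤ M 0 ω := by
      refine csSup_le ⟨S 0 ω, 0, ⟨le_rfl, hq0⟩, rfl⟩ ?_
      rintro x ⟨s, hs, rfl⟩
      exact hIccle s ⟨hs.1, le_trans hs.2 hqle⟩
    have hMq : M (q : ℝ) ω = M 0 ω := by
      rw [hMsplit ω (q : ℝ) hq0 hb0]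
      exact max_eq_left hsupq
    have hSq : M 0 ω - ε < S (q : ℝ) ω := by
      have : (q : ℝ) ∈ Metric.ball u0 δ := by
        rw [Metric.mem_ball, Real.dist_eq, abs_lt]
        constructor <;> linarith
      exact hball this
    rw [hTS, hMq]
    linarith
  -- Fact 1: on good paths, the coded infimum of S over [0,∞) computed on rationals
  have fact1 : ∀ ω ∈ L,
      (⨅ q : ℚ, ((S (max (q : ℝ) 0) ω : ℝ) : EReal)) =
        ((sInf ((fun t => S t ω) '' Ici 0) : ℝ) : EReal) := by
    intro ω hω
    have hdense := sInf_image_Ici_eq (fun t => S t ω) (hcont ω)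
    have hbb : BddBelow (range fun q : ℚ => S (max (q : ℝ) 0) ω) := by
      refine (bddBelow_image_Ici_of_tendsto (hcont ω) (htop ω hω)).mono ?_
      rintro x ⟨q, rfl⟩
      exact ⟨max (q : ℝ) 0, mem_Ici.2 (le_max_right _ _), rfl⟩
    rw [hdense]
    exact (coe_sInf_range_rat _ hbb).symm
  -- Fact 2: on good paths, the coded infimum of TS over [0,∞) equals -(M 0)
  have fact2 : ∀ ω ∈ L,
      (⨅ q : ℚ, ((TS (max (q : ℝ) 0) ω : ℝ) : EReal)) = ((-(M 0 ω) : ℝ) : EReal) := by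
    intro ω hω
    set g : ℚ → ℝ := fun q => TS (max (q : ℝ) 0) ω with hgdef
    have hlb : ∀ q : ℚ, -(M 0 ω) ≤ g q := fun q => hTSlb ω hω _ (le_max_right _ _)
    have hbb : BddBelow (range g) := ⟨-(M 0 ω), by rintro x ⟨q, rfl⟩; exact hlb q⟩
    rw [← coe_sInf_range_rat g hbb]
    congr 1
    refine le_antisymm ?_ (le_csInf ⟨g 0, mem_range_self 0⟩ (by rintro x ⟨q, rfl⟩; exact hlb q))
    by_contra hcon
    push_neg at hcon
    obtain ⟨q, hq0, hqle⟩ := happrox ω hω ((sInf (range g) - (-(M 0 ω))) / 2) (by linarith)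
    have h1 : sInf (range g) ≤ g q := csInf_le hbb (mem_range_self q)
    have h2 : g q = TS (q : ℝ) ω := by rw [hgdef]; simp [max_eq_left hq0]
    rw [h2] at h1
    linarith
  -- measurability of M, TS and the path maps
  have hMmeas : ∀ t : ℝ, Measurable (M t) := by
    intro t
    have heq : M t = fun ω => (⨆ q : ℚ, ((S (min (q : ℝ) t) ω : ℝ) : EReal)).toReal := by
      funext ω
      rw [hM, sSup_image_Iic_eq _ (hcont ω) t, real_sSup_range_rat]
    rw [heq]
    exact measurable_ereal_toReal.comp
      (Measurable.iSup fun q => measurable_coe_real_ereal.comp (hmeas _))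
  have hTSmeas : ∀ t : ℝ, Measurable (TS t) := by
    intro t
    have heq : TS t = fun ω => 2 * M t ω - S t ω - 2 * M 0 ω := funext fun ω => hTS t ω
    rw [heq]
    exact (((hMmeas t).const_mul 2).sub (hmeas t)).sub ((hMmeas 0).const_mul 2)
  set GS : Ω → ℝ → ℝ := fun ω => fun t : ℝ => S t ω with hGSdef
  set GT : Ω → ℝ → ℝ := fun ω => fun t : ℝ => TS t ω with hGTdef
  have hGSm : Measurable GS := measurable_pi_lambda _ fun t => hmeas t
  have hGTm : Measurable GT := measurable_pi_lambda _ fun t => hTSmeas t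
  set Φ : (ℝ → ℝ) → ({t : ℝ // 0 ≤ t} → ℝ) := fun f => fun t => f t with hΦdef
  have hΦm : Measurable Φ := measurable_pi_lambda _ fun t => measurable_pi_apply _
  set K : (ℝ → ℝ) → EReal := fun f => ⨅ q : ℚ, ((f (max (q : ℝ) 0) : ℝ) : EReal) with hKdef
  have hKm : Measurable K :=
    Measurable.iInf fun q => measurable_coe_real_ereal.comp (measurable_pi_apply _)
  set E : Set (ℝ → ℝ) := K ⁻¹' {0} with hEdef
  have hEm : MeasurableSet E := hKm (measurableSet_singleton 0)
  have hBm : MeasurableSet B := by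
    rw [hB]
    exact hMmeas 0 (measurableSet_singleton 0)
  -- almost-everywhere identification of the events
  have hAE : A =ᵐ[P] GS ⁻¹' E := by
    rw [Filter.eventuallyEq_set]
    filter_upwards [hlinL] with ω hω
    rw [hA]
    have hK1 : K (GS ω) = ((sInf ((fun t => S t ω) '' Ici 0) : ℝ) : EReal) := fact1 ω hω
    show sInf ((fun t => S t ω) '' Ici 0) = 0 ↔ ω ∈ GS ⁻¹' E
    have hmem : ω ∈ GS ⁻¹' E ↔ K (GS ω) = 0 := Iff.rfl
    rw [hmem, hK1]
    constructor
    · intro h; rw [h]; rfl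
    · intro h; exact_mod_cast h
  have hBE : GT ⁻¹' E =ᵐ[P] B := by
    rw [Filter.eventuallyEq_set]
    filter_upwards [hlinL] with ω hω
    rw [hB]
    have hK2 : K (GT ω) = ((-(M 0 ω) : ℝ) : EReal) := fact2 ω hω
    show ω ∈ GT ⁻¹' E ↔ M 0 ω = 0
    have hmem : ω ∈ GT ⁻¹' E ↔ K (GT ω) = 0 := Iff.rfl
    rw [hmem, hK2]
    constructor
    · intro h
      have h' : -(M 0 ω) = 0 := by exact_mod_cast h
      linarith
    · intro h; rw [h]; norm_num
  -- identification of the restricted transformed path on B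
  have hcongr : ∀ᵐ ω ∂(P.restrict B),
      (fun t : {t : ℝ // 0 ≤ t} => TS (t : ℝ) ω) =
        fun t : {t : ℝ // 0 ≤ t} => 2 * sSup ((fun s => S s ω) '' Icc 0 (t : ℝ)) - S t ω := by
    filter_upwards [ae_restrict_of_ae hlinL, ae_restrict_mem hBm] with ω hω hωB
    funext t
    have hb0 : BddAbove ((fun s => S s ω) '' Iic 0) := hbddA ω hω 0
    have hM0 : M 0 ω = 0 := by rw [hB] at hωB; exact hωB
    have hsplit := hMsplit ω (t : ℝ) t.2 hb0
    have hsup0 : 0 ≤ sSup ((fun s => S s ω) '' Icc 0 (t : ℝ)) := by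
      have h1 : S 0 ω ≤ sSup ((fun s => S s ω) '' Icc 0 (t : ℝ)) :=
        le_csSup ((isCompact_Icc.image (hcont ω)).bddAbove) ⟨0, ⟨le_rfl, t.2⟩, rfl⟩
      rw [h0 ω] at h1; exact h1
    rw [hTS, hsplit, hM0, max_eq_right hsup0]
    ring
  -- conditioning commutes with pushing forward along preimages
  have hpre : ∀ (G : Ω → ℝ → ℝ), Measurable G →
      Measure.map G (ProbabilityTheory.cond P (G ⁻¹' E)) =
        ProbabilityTheory.cond (Measure.map G P) E := by
    intro G hG
    unfold ProbabilityTheory.cond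
    rw [Measure.restrict_map hG hEm, Measure.map_apply hG hEm, Measure.map_smul]
  have hcond_congr : ∀ {s t : Set Ω}, s =ᵐ[P] t →
      ProbabilityTheory.cond P s = ProbabilityTheory.cond P t := by
    intro s t hst
    unfold ProbabilityTheory.cond
    rw [measure_congr hst, Measure.restrict_congr_set hst]
  -- the chain of equalities
  have e1 : Measure.map (fun ω => fun t : {t : ℝ // 0 ≤ t} => S (t : ℝ) ω)
      (ProbabilityTheory.cond P A) =
      Measure.map Φ (Measure.map GS (ProbabilityTheory.cond P A)) :=
    (Measure.map_map hΦm hGSm).symm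
  have e2 : Measure.map GS (ProbabilityTheory.cond P A) =
      ProbabilityTheory.cond (Measure.map GS P) E := by
    rw [hcond_congr hAE]; exact hpre GS hGSm
  have e4 : ProbabilityTheory.cond (Measure.map GS P) E =
      ProbabilityTheory.cond (Measure.map GT P) E := by rw [hinv]
  have e5 : ProbabilityTheory.cond (Measure.map GT P) E =
      Measure.map GT (ProbabilityTheory.cond P B) := by
    rw [← hcond_congr hBE]; exact (hpre GT hGTm).symm
  have e7 : Measure.map Φ (Measure.map GT (ProbabilityTheory.cond P B)) =
      Measure.map (Φ ∘ GT) (ProbabilityTheory.cond P B) :=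
    Measure.map_map hΦm hGTm
  have e8 : Measure.map (Φ ∘ GT) (ProbabilityTheory.cond P B) =
      Measure.map (fun ω => fun t : {t : ℝ // 0 ≤ t} =>
        2 * sSup ((fun s => S s ω) '' Icc 0 (t : ℝ)) - S t ω)
        (ProbabilityTheory.cond P B) := by
    apply Measure.map_congr
    show (Φ ∘ GT) =ᵐ[(P B)⁻¹ • P.restrict B] _
    exact Measure.ae_smul_measure hcongr _
  rw [e1, e2, e4, e5, e7, e8]
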